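/- arXiv:1706.08516 — 5 statements merged into one kernel-verified Lean document; each statement's English description precedes it below -/
import Mathlib

section
/- Let A be a unital C*-algebra, π : Mₙ(ℂ) → A a *-homomorphism and γ : Mₙ(ℂ) → A a *-antihomomorphism with elementwise commuting ranges, and let q := n^{-1} Σ_{i,j} γ(e_{ij}) π(e_{ji}) where (e_{ij}) are the standard matrix units. Then q is a self-adjoint projection (q = q* = q²). -/
/-!
Write `S = ∑ i j, γ(e i j) π(e j i)`, so that `q = n⁻¹ S`. Taking adjoints swaps `e i j` with
`e j i` in both factors, and the commuting ranges put the factors back in order, so `S` is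
self-adjoint. In `S²` the commuting ranges regroup each product of two terms as
`γ(e k l e i j) π(e j i e l k)`, which vanishes unless `l = i`; the surviving terms give every
term of `S` once for each value of `i`, so `S² = n S` and `q² = q`.
-/

open Matrix

section

variable {m R A : Type*} [Fintype m] [DecidableEq m]

def matrixUnitSum [CommSemiring R] [AddCommMonoid A] [Mul A]
    (γ π : Matrix m m R → A) : A :=
  ∑ i, ∑ j, γ (single i j 1) * π (single j i 1)

theorem isSelfAdjoint_matrixUnitSum [CommSemiring R] [StarRing R] [NonUnitalSemiring A]
    [StarRing A] (γ π : Matrix m m R → A)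
    (hγ : ∀ x, γ (star x) = star (γ x)) (hπ : ∀ x, π (star x) = star (π x))
    (hcomm : ∀ x y, γ x * π y = π y * γ x) :
    IsSelfAdjoint (matrixUnitSum γ π) := by
  have hstar : ∀ i j : m, star (single i j (1 : R)) = single j i 1 := fun i j => by
    rw [star_eq_conjTranspose, conjTranspose_single, star_one]
  have hterm : ∀ i j : m, star (γ (single i j 1) * π (single j i 1))
      = γ (single j i 1) * π (single i j 1) := fun i j => by
    rw [star_mul, ← hπ, ← hγ, hstar, hstar, hcomm]
  simp only [IsSelfAdjoint, matrixUnitSum, star_sum, hterm]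
  exact Finset.sum_comm

theorem matrixUnitSum_mul_self [CommSemiring R] [NonUnitalSemiring A]
    (γ π : Matrix m m R → A) (hγ0 : γ 0 = 0)
    (hγ : ∀ x y, γ (x * y) = γ y * γ x) (hπ : ∀ x y, π (x * y) = π x * π y)
    (hcomm : ∀ x y, γ x * π y = π y * γ x) :
    matrixUnitSum γ π * matrixUnitSum γ π = Fintype.card m • matrixUnitSum γ π := by
  have hprod : ∀ i j k l : m,
      γ (single i j 1) * π (single j i 1) * (γ (single k l 1) * π (single l k 1))
        = if l = i then γ (single k j 1) * π (single j k 1) else 0 := fun i j k l => by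
    have hregroup : γ (single i j 1) * π (single j i 1) * (γ (single k l 1) * π (single l k 1))
        = γ (single k l 1 * single i j 1) * π (single j i 1 * single l k 1) := by
      rw [hγ, hπ, mul_assoc, ← mul_assoc (π _), ← hcomm, mul_assoc, ← mul_assoc]
    rw [hregroup]
    split_ifs with h
    · subst h
      simp only [single_mul_single_same, mul_one]
    · rw [single_mul_single_of_ne (h := h), hγ0, zero_mul]
  calc matrixUnitSum γ π * matrixUnitSum γ π
      = ∑ i, ∑ j, ∑ k, ∑ l,
          γ (single i j 1) * π (single j i 1) * (γ (single k l 1) * π (single l k 1)) := by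
        simp only [matrixUnitSum, Finset.sum_mul]
        simp only [Finset.mul_sum]
    _ = ∑ _i : m, ∑ j, ∑ k, γ (single k j 1) * π (single j k 1) := by
        simp only [hprod, Finset.sum_ite_eq', Finset.mem_univ, if_true]
    _ = Fintype.card m • matrixUnitSum γ π := by
        rw [Finset.sum_const, Finset.card_univ, matrixUnitSum, Finset.sum_comm]

end

theorem IsIdempotentElem.inv_smul_of_mul_self_eq_smul {K A : Type*} [GroupWithZero K] [Mul A]
    [MulAction K A] [IsScalarTower K A A] [SMulCommClass K A A] {c : K} {a : A}
    (h : a * a = c • a) : IsIdempotentElem (c⁻¹ • a) := by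
  rw [IsIdempotentElem, smul_mul_smul_comm, h, smul_smul]
  congr 1
  rcases eq_or_ne c 0 with rfl | hc
  · simp
  · rw [mul_assoc, inv_mul_cancel₀ hc, mul_one]

/-- Let `A` be a unital C*-algebra, `π : Mₙ(ℂ) → A` a *-homomorphism and
`γ : Mₙ(ℂ) → A` a *-antihomomorphism with elementwise commuting ranges, and
`q := n⁻¹ Σ_{i,j} γ(e i j) π(e j i)` where `(e i j)` are the standard matrix units.
Then `q` is a self-adjoint projection: `q = q* = q²`. -/
theorem stmt4 {A : Type*} [CStarAlgebra A] {n : ℕ}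
    (π : Matrix (Fin n) (Fin n) ℂ →⋆ₙₐ[ℂ] A)
    (γ : Matrix (Fin n) (Fin n) ℂ →ₗ[ℂ] A)
    (hγmul : ∀ x y : Matrix (Fin n) (Fin n) ℂ, γ (x * y) = γ y * γ x)
    (hγstar : ∀ x : Matrix (Fin n) (Fin n) ℂ, γ (star x) = star (γ x))
    (hcomm : ∀ x y : Matrix (Fin n) (Fin n) ℂ, γ x * π y = π y * γ x)
    (E : Fin n → Fin n → Matrix (Fin n) (Fin n) ℂ)
    (hE : ∀ i j, E i j = Matrix.single i j 1)
    (q : A)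
    (hq : q = (n : ℂ)⁻¹ • ∑ i, ∑ j, γ (E i j) * π (E j i)) :
    star q = q ∧ q * q = q := by
  replace hq : q = (n : ℂ)⁻¹ • matrixUnitSum γ π := by
    simpa only [hE, matrixUnitSum] using hq
  have hself : IsSelfAdjoint (matrixUnitSum γ π) :=
    isSelfAdjoint_matrixUnitSum γ π hγstar (map_star π) hcomm
  have hsq : matrixUnitSum γ π * matrixUnitSum γ π = (n : ℂ) • matrixUnitSum γ π := by
    rw [matrixUnitSum_mul_self γ π (map_zero γ) hγmul (map_mul π) hcomm, Fintype.card_fin,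
      Nat.cast_smul_eq_nsmul]
  subst hq
  exact ⟨(IsSelfAdjoint.natCast (R := ℂ) n).inv₀.smul hself,
    IsIdempotentElem.inv_smul_of_mul_self_eq_smul hsq⟩
end

section
/- Let A be a unital C*-algebra, π : Mₙ(ℂ) → A a *-homomorphism and γ : Mₙ(ℂ) → A a *-antihomomorphism with elementwise commuting ranges, and set q := n^{-1} Σ_{i,j} γ(e_{ij}) π(e_{ji}). Then for every matrix a ∈ Mₙ(ℂ): q·γ(a) = q·π(a) and γ(a)·q = π(a)·q. -/
/-!
Write `s = Σ γ(e_ij) π(e_ji)`. Since `γ` reverses products and commutes with `π`, both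
`s γ(e_kl)` and `s π(e_kl)` collapse to `Σ_j γ(e_kj) π(e_jl)`, and both `γ(e_kl) s` and
`π(e_kl) s` to `Σ_i γ(e_il) π(e_ki)`. Linearity extends these identities from matrix units
to all matrices.
-/

open Matrix Finset

theorem Matrix.linearMap_ext_single_one {m n R M : Type*} [Finite m] [Finite n] [DecidableEq m]
    [DecidableEq n] [CommSemiring R] [AddCommMonoid M] [Module R M]
    {f g : Matrix m n R →ₗ[R] M} (h : ∀ i j, f (single i j 1) = g (single i j 1)) : f = g :=
  ext_linearMap R fun i j => LinearMap.ext_ring (h i j)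

theorem Matrix.single_one_mul_single_one {m K : Type*} [Fintype m] [DecidableEq m] [Semiring K]
    (i j k l : m) :
    (single i j 1 * single k l 1 : Matrix m m K) = if j = k then single i l 1 else 0 := by
  split_ifs with h
  · subst h; simp
  · exact single_mul_single_of_ne (c := 1) i j k h 1

section SwapSum

variable {m K A : Type*} [Fintype m] [DecidableEq m] [CommSemiring K]
  [NonUnitalSemiring A] [Module K A]

/-- The image of the flip `Σ e_ij ⊗ e_ji` under `γ ⊗ π`. -/
def swapSum (γ π : Matrix m m K → A) : A :=
  ∑ i, ∑ j, γ (single i j 1) * π (single j i 1)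

variable {F : Type*} [FunLike F (Matrix m m K) A] [NonUnitalAlgHomClass F K (Matrix m m K) A]
  (π : F) (γ : Matrix m m K →ₗ[K] A)

theorem swapSum_mul_single (hγmul : ∀ x y, γ (x * y) = γ y * γ x)
    (hcomm : ∀ x y, γ x * π y = π y * γ x) (k l : m) :
    swapSum γ π * γ (single k l 1) = swapSum γ π * π (single k l 1) := by
  have hγ : swapSum γ π * γ (single k l 1) = ∑ j, γ (single k j 1) * π (single j l 1) := by
    simp_rw [swapSum, sum_mul, mul_assoc, ← hcomm, ← mul_assoc, ← hγmul,
      single_one_mul_single_one, apply_ite γ, map_zero, ite_mul, zero_mul]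
    rw [sum_comm]; simp
  have hπ : swapSum γ π * π (single k l 1) = ∑ j, γ (single k j 1) * π (single j l 1) := by
    simp_rw [swapSum, sum_mul, mul_assoc, ← map_mul, single_one_mul_single_one,
      apply_ite π, map_zero, mul_ite, mul_zero]
    rw [sum_comm]; simp
  rw [hγ, hπ]

theorem single_mul_swapSum (hγmul : ∀ x y, γ (x * y) = γ y * γ x)
    (hcomm : ∀ x y, γ x * π y = π y * γ x) (k l : m) :
    γ (single k l 1) * swapSum γ π = π (single k l 1) * swapSum γ π := by
  have hγ : γ (single k l 1) * swapSum γ π = ∑ i, γ (single i l 1) * π (single k i 1) := by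
    simp_rw [swapSum, mul_sum, ← mul_assoc, ← hγmul,
      single_one_mul_single_one, apply_ite γ, map_zero, ite_mul, zero_mul]
    simp
  have hπ : π (single k l 1) * swapSum γ π = ∑ i, γ (single i l 1) * π (single k i 1) := by
    simp_rw [swapSum, mul_sum, ← mul_assoc, ← hcomm, mul_assoc, ← map_mul,
      single_one_mul_single_one, apply_ite π, map_zero, mul_ite, mul_zero]
    simp
  rw [hγ, hπ]

theorem swapSum_mul_eq [SMulCommClass K A A] (hγmul : ∀ x y, γ (x * y) = γ y * γ x)
    (hcomm : ∀ x y, γ x * π y = π y * γ x) (a : Matrix m m K) :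
    swapSum γ π * γ a = swapSum γ π * π a := by
  have h : LinearMap.mulLeft K (swapSum γ π) ∘ₗ γ =
      LinearMap.mulLeft K (swapSum γ π) ∘ₗ (π : Matrix m m K →ₗ[K] A) :=
    linearMap_ext_single_one (swapSum_mul_single π γ hγmul hcomm)
  exact LinearMap.congr_fun h a

theorem mul_swapSum_eq [IsScalarTower K A A] (hγmul : ∀ x y, γ (x * y) = γ y * γ x)
    (hcomm : ∀ x y, γ x * π y = π y * γ x) (a : Matrix m m K) :
    γ a * swapSum γ π = π a * swapSum γ π := by
  have h : LinearMap.mulRight K (swapSum γ π) ∘ₗ γ =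
      LinearMap.mulRight K (swapSum γ π) ∘ₗ (π : Matrix m m K →ₗ[K] A) :=
    linearMap_ext_single_one (single_mul_swapSum π γ hγmul hcomm)
  exact LinearMap.congr_fun h a

end SwapSum

theorem stmt5_general {A : Type*} [CStarAlgebra A] {n : ℕ}
    (π : Matrix (Fin n) (Fin n) ℂ →⋆ₙₐ[ℂ] A)
    (γ : Matrix (Fin n) (Fin n) ℂ →ₗ[ℂ] A)
    (hγmul : ∀ x y : Matrix (Fin n) (Fin n) ℂ, γ (x * y) = γ y * γ x)
    (hcomm : ∀ x y : Matrix (Fin n) (Fin n) ℂ, γ x * π y = π y * γ x)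
    (E : Fin n → Fin n → Matrix (Fin n) (Fin n) ℂ)
    (hE : ∀ i j, E i j = Matrix.single i j 1)
    (q : A)
    (hq : q = (n : ℂ)⁻¹ • ∑ i, ∑ j, γ (E i j) * π (E j i)) :
    ∀ a : Matrix (Fin n) (Fin n) ℂ, q * γ a = q * π a ∧ γ a * q = π a * q := by
  intro a
  have hq' : q = (n : ℂ)⁻¹ • swapSum γ π := by simp only [hq, hE, swapSum]
  rw [hq', smul_mul_assoc, smul_mul_assoc, mul_smul_comm, mul_smul_comm,
    swapSum_mul_eq π γ hγmul hcomm, mul_swapSum_eq π γ hγmul hcomm]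
  exact ⟨rfl, rfl⟩

/-- Let `A` be a unital C*-algebra, `π : Mₙ(ℂ) → A` a *-homomorphism and
`γ : Mₙ(ℂ) → A` a *-antihomomorphism with elementwise commuting ranges, and
`q := n⁻¹ Σ_{i,j} γ(e i j) π(e j i)`.  Then for every matrix `a ∈ Mₙ(ℂ)`:
`q·γ(a) = q·π(a)` and `γ(a)·q = π(a)·q`. -/
theorem stmt5 {A : Type*} [CStarAlgebra A] {n : ℕ}
    (π : Matrix (Fin n) (Fin n) ℂ →⋆ₙₐ[ℂ] A)
    (γ : Matrix (Fin n) (Fin n) ℂ →ₗ[ℂ] A)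
    (hγmul : ∀ x y : Matrix (Fin n) (Fin n) ℂ, γ (x * y) = γ y * γ x)
    (hγstar : ∀ x : Matrix (Fin n) (Fin n) ℂ, γ (star x) = star (γ x))
    (hcomm : ∀ x y : Matrix (Fin n) (Fin n) ℂ, γ x * π y = π y * γ x)
    (E : Fin n → Fin n → Matrix (Fin n) (Fin n) ℂ)
    (hE : ∀ i j, E i j = Matrix.single i j 1)
    (q : A)
    (hq : q = (n : ℂ)⁻¹ • ∑ i, ∑ j, γ (E i j) * π (E j i)) :
    ∀ a : Matrix (Fin n) (Fin n) ℂ, q * γ a = q * π a ∧ γ a * q = π a * q :=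
  stmt5_general π γ hγmul hcomm E hE q hq
end

section
/- Every element a of a C*-algebra A is a product of two elements of A: there exists c ∈ A with a = (a a*)^{1/4} · c. More precisely, c can be taken as the norm limit of the elements ((a a*) + ε·1)^{-1/4} · a (computed in the unitization) as ε → 0⁺, and this limit lies in A. -/
open Filter Topology

/-!
Write `b = a a*` in the unitization. For `g` continuous on the spectrum of `b`, the C*-identity
gives `‖g(b) a‖² = ‖g(b) b g(b)‖ ≤ sup_{σ(b)} g(t)² t`, so elements of the form `g(b) a` are
controlled by `|g(t)| t^{1/2}`. Since `t^{1/2} (t + ε)^{-1/4}` is within `ε^{1/4}` of `t^{1/4}`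
uniformly in `t ≥ 0` (subadditivity of `t ↦ t^{1/4}`), the family `(b + ε)^{-1/4} a` is Cauchy
as `ε → 0⁺`. Its limit lies in `A` because every term has scalar part `0`, and
`b^{1/4} (b + ε)^{-1/4} a → a` by the same kind of estimate, which yields the factorization.
-/

lemma rpow_quarter_sq {t : ℝ} (ht : 0 ≤ t) : (t ^ (4⁻¹ : ℝ)) ^ 2 = t ^ (2⁻¹ : ℝ) := by
  rw [← Real.rpow_natCast, ← Real.rpow_mul ht]
  norm_num

lemma rpow_add_sub_rpow_le {p t ε : ℝ} (ht : 0 ≤ t) (hε : 0 ≤ ε) (hp : 0 ≤ p) (hp1 : p ≤ 1) :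
    (t + ε) ^ p - t ^ p ≤ ε ^ p := by
  linarith [Real.rpow_add_le_add_rpow ht hε hp hp1]

lemma abs_add_rpow_neg_quarter_mul_rpow_half_sub_rpow_quarter_le {t ε : ℝ} (ht : 0 ≤ t) (hε : 0 < ε) :
    |(t + ε) ^ (-4⁻¹ : ℝ) * t ^ (2⁻¹ : ℝ) - t ^ (4⁻¹ : ℝ)| ≤ ε ^ (4⁻¹ : ℝ) := by
  set u := t ^ (4⁻¹ : ℝ)
  set v := (t + ε) ^ (4⁻¹ : ℝ)
  have hu : 0 ≤ u := Real.rpow_nonneg ht _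
  have hv : 0 < v := Real.rpow_pos_of_pos (by linarith) _
  have huv : u ≤ v := Real.rpow_le_rpow ht (by linarith) (by norm_num)
  have hdiff : u - v⁻¹ * u ^ 2 = u / v * (v - u) := by field_simp
  rw [Real.rpow_neg (by linarith), ← rpow_quarter_sq ht, abs_sub_comm, hdiff,
    abs_of_nonneg (by positivity)]
  calc u / v * (v - u) ≤ v - u :=
        mul_le_of_le_one_left (sub_nonneg.mpr huv) (div_le_one_of_le₀ huv hv.le)
    _ ≤ ε ^ (4⁻¹ : ℝ) := rpow_add_sub_rpow_le ht hε.le (by norm_num) (by norm_num)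

lemma abs_rpow_quarter_mul_add_rpow_neg_quarter_sub_one_mul_rpow_half_le {t ε : ℝ} (ht : 0 ≤ t)
    (hε : 0 < ε) :
    |t ^ (4⁻¹ : ℝ) * (t + ε) ^ (-4⁻¹ : ℝ) - 1| * t ^ (2⁻¹ : ℝ) ≤ ε ^ (2⁻¹ : ℝ) := by
  set u := t ^ (4⁻¹ : ℝ)
  set v := (t + ε) ^ (4⁻¹ : ℝ)
  have hu : 0 ≤ u := Real.rpow_nonneg ht _
  have hv : 0 < v := Real.rpow_pos_of_pos (by linarith) _
  have huv : u ≤ v := Real.rpow_le_rpow ht (by linarith) (by norm_num)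
  have hdiff : |u * v⁻¹ - 1| * u ^ 2 = u / v * ((v - u) * u) := by
    rw [abs_sub_comm, abs_of_nonneg (by rw [sub_nonneg]; exact mul_inv_le_one_of_le₀ huv hv.le)]
    field_simp
  rw [Real.rpow_neg (by linarith), ← rpow_quarter_sq ht, hdiff]
  calc u / v * ((v - u) * u) ≤ (v - u) * u :=
        mul_le_of_le_one_left (mul_nonneg (sub_nonneg.mpr huv) hu) (div_le_one_of_le₀ huv hv.le)
    _ ≤ v ^ 2 - u ^ 2 := by nlinarith
    _ ≤ ε ^ (2⁻¹ : ℝ) := by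
        rw [rpow_quarter_sq ht, rpow_quarter_sq (by linarith)]
        exact rpow_add_sub_rpow_le ht hε.le (by norm_num) (by norm_num)

lemma cauchy_map_of_dist_le {α E : Type*} [PseudoMetricSpace E] {l : Filter α} [l.NeBot]
    {F : α → E} {r : α → ℝ} (hr : Tendsto r l (𝓝 0))
    (h : ∀ᶠ p in l ×ˢ l, dist (F p.1) (F p.2) ≤ r p.1 + r p.2) : Cauchy (l.map F) := by
  rw [cauchy_map_iff', tendsto_uniformity_iff_dist_tendsto_zero]
  refine squeeze_zero' (Eventually.of_forall fun _ => dist_nonneg) h ?_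
  simpa using (hr.comp tendsto_fst).add (hr.comp tendsto_snd)

section CStarAlgebra

variable {B : Type*} [CStarAlgebra B] [PartialOrder B] [StarOrderedRing B]

lemma norm_cfc_mul_le (x : B) {g : ℝ → ℝ} (hg : ContinuousOn g (spectrum ℝ (x * star x)))
    {M : ℝ} (hM : 0 ≤ M) (h : ∀ t ∈ spectrum ℝ (x * star x), |g t| * t ^ (2⁻¹ : ℝ) ≤ M) :
    ‖cfc g (x * star x) * x‖ ≤ M := by
  have hsa : IsSelfAdjoint (cfc g (x * star x)) := cfc_predicate g _
  have hmul : cfc g (x * star x) * x * star (cfc g (x * star x) * x)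
      = cfc (fun t => g t * t * g t) (x * star x) := by
    rw [star_mul, hsa.star_eq, cfc_mul (fun t => g t * t) g _ (hg.mul continuousOn_id) hg,
      cfc_mul g (fun t : ℝ => t) _ hg continuousOn_id, cfc_id' ℝ (x * star x)]
    noncomm_ring
  refine (pow_le_pow_iff_left₀ (norm_nonneg _) hM two_ne_zero).mp ?_
  rw [sq, ← CStarRing.norm_self_mul_star, hmul]
  refine norm_cfc_le (by positivity) fun t ht => ?_
  have ht0 : 0 ≤ t := spectrum_nonneg_of_nonneg (mul_star_self_nonneg x) ht
  have hhalf : (t ^ (2⁻¹ : ℝ)) ^ 2 = t := by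
    rw [← Real.rpow_natCast, ← Real.rpow_mul ht0]; norm_num
  calc ‖g t * t * g t‖ = (|g t| * t ^ (2⁻¹ : ℝ)) ^ 2 := by
        rw [mul_pow, hhalf, sq_abs, Real.norm_eq_abs, show g t * t * g t = g t ^ 2 * t by ring,
          abs_of_nonneg (by positivity)]
    _ ≤ M ^ 2 := pow_le_pow_left₀ (by positivity) (h t ht) 2

lemma continuousOn_rpow_neg_quarter_add (x : B) {ε : ℝ} (hε : 0 < ε) :
    ContinuousOn (fun t : ℝ => (t + ε) ^ (-4⁻¹ : ℝ)) (spectrum ℝ (x * star x)) :=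
  ContinuousOn.rpow_const (by fun_prop) fun t ht =>
    Or.inl (by linarith [spectrum_nonneg_of_nonneg (mul_star_self_nonneg x) ht])

lemma norm_cfc_rpow_neg_quarter_mul_sub_le (x : B) {ε δ : ℝ} (hε : 0 < ε) (hδ : 0 < δ) :
    ‖cfc (fun t : ℝ => (t + ε) ^ (-4⁻¹ : ℝ)) (x * star x) * x
      - cfc (fun t : ℝ => (t + δ) ^ (-4⁻¹ : ℝ)) (x * star x) * x‖
      ≤ ε ^ (4⁻¹ : ℝ) + δ ^ (4⁻¹ : ℝ) := by
  have hcε := continuousOn_rpow_neg_quarter_add x hε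
  have hcδ := continuousOn_rpow_neg_quarter_add x hδ
  rw [← sub_mul, ← cfc_sub _ _ _ hcε hcδ]
  refine norm_cfc_mul_le x (hcε.sub hcδ) (by positivity) fun t ht => ?_
  have ht0 : 0 ≤ t := spectrum_nonneg_of_nonneg (mul_star_self_nonneg x) ht
  rw [Pi.sub_apply, ← abs_of_nonneg (Real.rpow_nonneg ht0 (2⁻¹ : ℝ)), ← abs_mul]
  calc _ = |((t + ε) ^ (-4⁻¹ : ℝ) * t ^ (2⁻¹ : ℝ) - t ^ (4⁻¹ : ℝ))
          - ((t + δ) ^ (-4⁻¹ : ℝ) * t ^ (2⁻¹ : ℝ) - t ^ (4⁻¹ : ℝ))| := by ring_nf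
    _ ≤ _ := (abs_sub _ _).trans (add_le_add (abs_add_rpow_neg_quarter_mul_rpow_half_sub_rpow_quarter_le ht0 hε)
          (abs_add_rpow_neg_quarter_mul_rpow_half_sub_rpow_quarter_le ht0 hδ))

lemma cauchy_map_cfc_rpow_neg_quarter_mul (x : B) :
    Cauchy ((𝓝[>] (0 : ℝ)).map
      fun ε => cfc (fun t : ℝ => (t + ε) ^ (-4⁻¹ : ℝ)) (x * star x) * x) := by
  refine cauchy_map_of_dist_le (r := fun ε : ℝ => ε ^ (4⁻¹ : ℝ)) ?_ ?_
  · simpa using ((Real.continuousAt_rpow_const 0 (4⁻¹ : ℝ) (Or.inr (by norm_num))).tendsto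
      ).mono_left nhdsWithin_le_nhds
  · filter_upwards [prod_mem_prod self_mem_nhdsWithin self_mem_nhdsWithin] with p hp
    rw [dist_eq_norm]
    exact norm_cfc_rpow_neg_quarter_mul_sub_le x hp.1 hp.2

lemma tendsto_cfc_rpow_quarter_mul_cfc_rpow_neg_quarter_mul (x : B) :
    Tendsto (fun ε : ℝ => cfc (fun t : ℝ => t ^ (4⁻¹ : ℝ)) (x * star x)
      * (cfc (fun t : ℝ => (t + ε) ^ (-4⁻¹ : ℝ)) (x * star x) * x)) (𝓝[>] 0) (𝓝 x) := by
  have hq : ContinuousOn (fun t : ℝ => t ^ (4⁻¹ : ℝ)) (spectrum ℝ (x * star x)) :=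
    continuousOn_id.rpow_const fun _ _ => Or.inr (by norm_num)
  have hbound : ∀ ε > (0 : ℝ), ‖cfc (fun t : ℝ => t ^ (4⁻¹ : ℝ)) (x * star x)
      * (cfc (fun t : ℝ => (t + ε) ^ (-4⁻¹ : ℝ)) (x * star x) * x) - x‖ ≤ ε ^ (2⁻¹ : ℝ) := by
    intro ε hε
    have hcε := continuousOn_rpow_neg_quarter_add x hε
    rw [← mul_assoc, ← cfc_mul _ _ _ hq hcε, ← sub_one_mul, ← cfc_const_one ℝ (x * star x),
      ← cfc_sub (fun t : ℝ => t ^ (4⁻¹ : ℝ) * (t + ε) ^ (-4⁻¹ : ℝ)) (fun _ => 1) _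
        (hq.mul hcε) continuousOn_const]
    exact norm_cfc_mul_le x ((hq.mul hcε).sub continuousOn_const) (by positivity)
      fun t ht => abs_rpow_quarter_mul_add_rpow_neg_quarter_sub_one_mul_rpow_half_le
        (spectrum_nonneg_of_nonneg (mul_star_self_nonneg x) ht) hε
  rw [← tendsto_sub_nhds_zero_iff]
  refine squeeze_zero_norm' (eventually_nhdsWithin_of_forall hbound) ?_
  simpa using ((Real.continuousAt_rpow_const 0 (2⁻¹ : ℝ) (Or.inr (by norm_num))).tendsto
    ).mono_left nhdsWithin_le_nhds

end CStarAlgebra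

/-- Every element `a` of a (not necessarily unital) C*-algebra `A` is a product
of two elements of `A`: there is `c ∈ A` with `a = (a a*)^{1/4} · c`, where `c` is the norm limit,
as `ε → 0⁺`, of the elements `((a a*) + ε·1)^{-1/4} · a` computed in the unitization of `A`
(and this limit lies in `A`). -/
theorem stmt10 {A : Type*} [NonUnitalCStarAlgebra A] (a : A) :
    ∃ c : A,
      a = cfcₙ (fun t : ℝ => t ^ (4⁻¹ : ℝ)) (a * star a) * c ∧
      Tendsto
        (fun ε : ℝ =>
          cfc (fun t : ℝ => (t + ε) ^ (-(4⁻¹ : ℝ)))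
              ((a : Unitization ℂ A) * star (a : Unitization ℂ A)) *
            (a : Unitization ℂ A))
        (𝓝[>] (0 : ℝ)) (𝓝 (c : Unitization ℂ A)) := by
  set x : Unitization ℂ A := (a : Unitization ℂ A)
  obtain ⟨c', hc'⟩ := cauchy_map_iff_exists_tendsto.mp (cauchy_map_cfc_rpow_neg_quarter_mul x)
  have hfst : c'.fst = 0 := by
    refine tendsto_nhds_unique ((Unitization.continuous_fst.tendsto c').comp hc') ?_
    simp [Function.comp_def, x]
  lift c' to A using hfst with c
  refine ⟨c, Unitization.inr_injective (R := ℂ) ?_, hc'⟩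
  rw [Unitization.inr_mul, Unitization.real_cfcₙ_eq_cfc_inr (a * star a) _ (by simp),
    Unitization.inr_mul, Unitization.inr_star]
  exact tendsto_nhds_unique (tendsto_cfc_rpow_quarter_mul_cfc_rpow_neg_quarter_mul x)
    (hc'.const_mul _)
end

section
/- Let A be a C*-algebra and d : A → A a continuous derivation. For every multiplier m ∈ M(A) there is a unique multiplier d̃(m) ∈ M(A) such that d̃(m)·a = d(m a) − m·d(a) and a·d̃(m) = d(a m) − d(a)·m for all a ∈ A; the resulting map d̃ : M(A) → M(A) is a derivation extending d (identifying A with its image in M(A)) and satisfies d̃(1) = 0. -/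
open scoped MultiplierAlgebra

/-- Let `A` be a C*-algebra and `d : A → A` a continuous derivation.
For every multiplier `m ∈ M(A) = 𝓜(ℂ, A)` there is a unique multiplier `d̃(m)` such that
`d̃(m)·a = d(ma) − m·d(a)` and `a·d̃(m) = d(am) − d(a)·m` for all `a ∈ A` (phrased via the
left/right centralizer components `fst`/`snd`); the resulting map `d̃ : M(A) → M(A)` is a
derivation extending `d` (identifying `A` with its image in `M(A)`) with `d̃(1) = 0`. -/
theorem stmt18 {A : Type*} [NonUnitalCStarAlgebra A]
    (d : A →L[ℂ] A) (hd : ∀ x y : A, d (x * y) = d x * y + x * d y) :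
    (∀ m : 𝓜(ℂ, A), ∃! n : 𝓜(ℂ, A),
        (∀ a : A, n.fst a = d (m.fst a) - m.fst (d a)) ∧
        (∀ a : A, n.snd a = d (m.snd a) - m.snd (d a))) ∧
    (∀ D : 𝓜(ℂ, A) → 𝓜(ℂ, A),
      (∀ m : 𝓜(ℂ, A),
          (∀ a : A, (D m).fst a = d (m.fst a) - m.fst (d a)) ∧
          (∀ a : A, (D m).snd a = d (m.snd a) - m.snd (d a))) →
        (∀ m m' : 𝓜(ℂ, A), D (m * m') = D m * m' + m * D m') ∧
        (∀ m m' : 𝓜(ℂ, A), D (m + m') = D m + D m') ∧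
        (∀ (c : ℂ) (m : 𝓜(ℂ, A)), D (c • m) = c • D m) ∧
        (∀ a : A, D (a : 𝓜(ℂ, A)) = ((d a : A) : 𝓜(ℂ, A))) ∧
        D 1 = 0) := by
  constructor
  · intro m
    refine ⟨⟨(d.comp m.fst - m.fst.comp d, d.comp m.snd - m.snd.comp d), ?_⟩, ⟨fun a => rfl, fun a => rfl⟩, ?_⟩
    · intro x y
      have h1 : d (m.snd x * y) = d (m.snd x) * y + m.snd x * d y := hd _ _
      have h2 : d (x * m.fst y) = d x * m.fst y + x * d (m.fst y) := hd _ _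
      have hc := m.central x y
      have hc2 := m.central x (d y)
      have hc3 := m.central (d x) y
      simp only [ContinuousLinearMap.sub_apply, ContinuousLinearMap.comp_apply]
      rw [hc] at h1
      rw [h1] at h2
      rw [sub_mul, mul_sub, hc3, ← hc2]
      exact sub_eq_sub_iff_add_eq_add.mpr (h2.trans (add_comm _ _))
    · rintro ⟨⟨f, g⟩, hcen⟩ ⟨h1, h2⟩
      ext : 1
      refine Prod.ext ?_ ?_ <;> ext a
      · exact (h1 a).trans rfl
      · exact (h2 a).trans rfl
  · intro D hD
    have ext' : ∀ n n' : 𝓜(ℂ, A), (∀ a, n.fst a = n'.fst a) → (∀ a, n.snd a = n'.snd a) → n = n' := by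
      intro n n' h1 h2
      ext : 1
      exact Prod.ext (ContinuousLinearMap.ext h1) (ContinuousLinearMap.ext h2)
    refine ⟨?_, ?_, ?_, ?_, ?_⟩
    · intro m m'
      refine ext' _ _ (fun a => ?_) (fun a => ?_)
      · rw [(hD (m * m')).1 a]
        simp only [DoubleCentralizer.add_fst, DoubleCentralizer.mul_fst,
          ContinuousLinearMap.add_apply, ContinuousLinearMap.mul_apply,
          (hD m).1, (hD m').1, map_sub]
        abel
      · rw [(hD (m * m')).2 a]
        simp only [DoubleCentralizer.add_snd, DoubleCentralizer.mul_snd,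
          ContinuousLinearMap.add_apply, ContinuousLinearMap.mul_apply,
          (hD m).2, (hD m').2, map_sub]
        abel
    · intro m m'
      refine ext' _ _ (fun a => ?_) (fun a => ?_)
      · rw [(hD (m + m')).1 a]
        simp only [DoubleCentralizer.add_fst, ContinuousLinearMap.add_apply,
          (hD m).1, (hD m').1, map_add]
        abel
      · rw [(hD (m + m')).2 a]
        simp only [DoubleCentralizer.add_snd, ContinuousLinearMap.add_apply,
          (hD m).2, (hD m').2, map_add]
        abel
    · intro c m
      refine ext' _ _ (fun a => ?_) (fun a => ?_)
      · rw [(hD (c • m)).1 a]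
        simp only [DoubleCentralizer.smul_fst, ContinuousLinearMap.smul_apply,
          (hD m).1, map_smul, smul_sub]
      · rw [(hD (c • m)).2 a]
        simp only [DoubleCentralizer.smul_snd, ContinuousLinearMap.smul_apply,
          (hD m).2, map_smul, smul_sub]
    · intro a
      refine ext' _ _ (fun x => ?_) (fun x => ?_)
      · rw [(hD _).1 x]
        simp only [DoubleCentralizer.coe_fst, ContinuousLinearMap.mul_apply']
        rw [hd a x]
        abel
      · rw [(hD _).2 x]
        simp only [DoubleCentralizer.coe_snd, ContinuousLinearMap.flip_apply,
          ContinuousLinearMap.mul_apply']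
        rw [hd x a]
        abel
    · refine ext' _ _ (fun a => ?_) (fun a => ?_)
      · rw [(hD 1).1 a]
        simp [DoubleCentralizer.one_fst, DoubleCentralizer.zero_fst]
      · rw [(hD 1).2 a]
        simp [DoubleCentralizer.one_snd, DoubleCentralizer.zero_snd]
end

section
/- Let H and K be Hilbert spaces. Every compact operator T ∈ K(H, K) factors as T = k·S with k ∈ K(K) positive and S ∈ K(H, K); one may take k = (T T*)^{1/4}. Consequently K(H, K) equals the closed linear span of {k S : k ∈ K(K), S ∈ K(H, K)}. -/
/-!
Put `A = T T†`, a positive compact operator, and `S_ε = (A + ε)^{-1/4} T`. Since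
`‖f(A) T‖² = ‖f(A) A f(A)‖ ≤ sup_{σ(A)} |√t f(t)|²`, every estimate reduces to a scalar one on
`σ(A) ⊆ [0, ‖A‖]`, and the key scalar fact is that `√t (t + ε)^{-1/4}` approximates `t^{1/4}`
uniformly within `ε^{1/4}` (from `(t + ε)^{1/4} ≤ t^{1/4} + ε^{1/4}`). Hence `S_ε` is Cauchy, its
limit `S` is compact, and `A^{1/4} S = lim A^{1/4} S_ε = T`. Compactness of `A^{1/4}` is proved
the same way: it is the norm limit of `A · A^{1/4} (A + ε)⁻¹ = T (T† A^{1/4} (A + ε)⁻¹)`.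
-/

open Filter Topology ContinuousLinearMap
open scoped InnerProduct

lemma rpow_inv_four_pow_four {t : ℝ} (ht : 0 ≤ t) : (t ^ (4:ℝ)⁻¹) ^ 4 = t := by
  simpa using Real.rpow_inv_natCast_pow ht (n := 4) (by norm_num)

lemma sqrt_eq_rpow_inv_four_sq {t : ℝ} (ht : 0 ≤ t) : √t = (t ^ (4:ℝ)⁻¹) ^ 2 := by
  conv_lhs => rw [← rpow_inv_four_pow_four ht]
  rw [show (t ^ (4:ℝ)⁻¹) ^ 4 = ((t ^ (4:ℝ)⁻¹) ^ 2) ^ 2 by ring, Real.sqrt_sq (by positivity)]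

lemma abs_sqrt_mul_inv_rpow_sub_rpow_le {t ε : ℝ} (ht : 0 ≤ t) (hε : 0 < ε) :
    |√t * ((t + ε) ^ (4:ℝ)⁻¹)⁻¹ - t ^ (4:ℝ)⁻¹| ≤ ε ^ (4:ℝ)⁻¹ := by
  have huv : t ^ (4:ℝ)⁻¹ ≤ (t + ε) ^ (4:ℝ)⁻¹ := by gcongr; linarith
  have hvuw := Real.rpow_add_le_add_rpow ht hε.le (p := (4:ℝ)⁻¹) (by norm_num) (by norm_num)
  rw [sqrt_eq_rpow_inv_four_sq ht]
  set u := t ^ (4:ℝ)⁻¹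
  set v := (t + ε) ^ (4:ℝ)⁻¹
  have hv : 0 < v := by positivity
  rw [abs_sub_comm, abs_of_nonneg]
  · calc u - u ^ 2 * v⁻¹ = u / v * (v - u) := by field_simp
      _ ≤ 1 * (v - u) := by gcongr; exact div_le_one_of_le₀ huv hv.le
      _ ≤ ε ^ (4:ℝ)⁻¹ := by linarith
  · have : u ^ 2 * v⁻¹ ≤ u := by
      rw [← div_eq_mul_inv, div_le_iff₀ hv, sq]; gcongr
    linarith

lemma abs_rpow_sub_mul_rpow_div_le {t ε : ℝ} (ht : 0 ≤ t) (hε : 0 < ε) :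
    |t ^ (4:ℝ)⁻¹ - t * (t ^ (4:ℝ)⁻¹ / (t + ε))| ≤ ε ^ (4:ℝ)⁻¹ := by
  have hs : 0 < t + ε := by positivity
  have huv : t ^ (4:ℝ)⁻¹ ≤ (t + ε) ^ (4:ℝ)⁻¹ := by gcongr; linarith
  have hwv : ε ^ (4:ℝ)⁻¹ ≤ (t + ε) ^ (4:ℝ)⁻¹ := by gcongr; linarith
  have hsplit : t ^ (4:ℝ)⁻¹ - t * (t ^ (4:ℝ)⁻¹ / (t + ε)) =
      t ^ (4:ℝ)⁻¹ * (ε ^ (4:ℝ)⁻¹) ^ 4 / ((t + ε) ^ (4:ℝ)⁻¹) ^ 4 := by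
    rw [rpow_inv_four_pow_four hε.le, rpow_inv_four_pow_four hs.le]
    field_simp; ring
  rw [hsplit, abs_of_nonneg (by positivity), div_le_iff₀ (by positivity)]
  calc t ^ (4:ℝ)⁻¹ * (ε ^ (4:ℝ)⁻¹) ^ 4 = t ^ (4:ℝ)⁻¹ * (ε ^ (4:ℝ)⁻¹) ^ 3 * ε ^ (4:ℝ)⁻¹ := by ring
    _ ≤ (t + ε) ^ (4:ℝ)⁻¹ * ((t + ε) ^ (4:ℝ)⁻¹) ^ 3 * ε ^ (4:ℝ)⁻¹ := by gcongr
    _ = ε ^ (4:ℝ)⁻¹ * ((t + ε) ^ (4:ℝ)⁻¹) ^ 4 := by ring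

lemma cauchySeq_of_dist_le_add {α : Type*} [PseudoMetricSpace α] {f : ℕ → α} {u : ℕ → ℝ}
    (hu : Tendsto u atTop (𝓝 0)) (hdist : ∀ m n, dist (f m) (f n) ≤ u m + u n) :
    CauchySeq f := by
  refine Metric.cauchySeq_iff'.2 fun δ hδ => ?_
  obtain ⟨N, hN⟩ := eventually_atTop.1 (hu.eventually (gt_mem_nhds (half_pos hδ)))
  exact ⟨N, fun n hn => (hdist n N).trans_lt (by linarith [hN n hn, hN N le_rfl])⟩

lemma tendsto_one_div_add_one_rpow_inv_four :
    Tendsto (fun n : ℕ => (1 / ((n : ℝ) + 1)) ^ (4:ℝ)⁻¹) atTop (𝓝 0) := by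
  simpa [Real.zero_rpow] using
    tendsto_one_div_add_atTop_nhds_zero_nat.rpow_const (p := (4:ℝ)⁻¹) (Or.inr (by norm_num))

lemma continuousOn_inv_rpow_inv_four_add {ε : ℝ} (hε : 0 < ε) :
    ContinuousOn (fun t : ℝ => ((t + ε) ^ (4:ℝ)⁻¹)⁻¹) (Set.Ici 0) :=
  ((Real.continuous_rpow_const (by norm_num)).comp (continuous_add_const ε)).continuousOn.inv₀
    fun t (ht : 0 ≤ t) => by simp only [Function.comp_apply]; positivity

lemma norm_cfc_rpow_inv_four_sub_mul_le {A : Type*} [CStarAlgebra A] [PartialOrder A]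
    [StarOrderedRing A] {a : A} (ha : 0 ≤ a) {ε : ℝ} (hε : 0 < ε) :
    ‖cfc (fun t : ℝ => t ^ (4:ℝ)⁻¹) a - a * cfc (fun t : ℝ => t ^ (4:ℝ)⁻¹ / (t + ε)) a‖ ≤
      ε ^ (4:ℝ)⁻¹ := by
  have hspec : ∀ t ∈ spectrum ℝ a, 0 ≤ t := fun t ht => spectrum_nonneg_of_nonneg ha ht
  have hcont : ContinuousOn (fun t : ℝ => t ^ (4:ℝ)⁻¹ / (t + ε)) (spectrum ℝ a) :=
    ((Real.continuous_rpow_const (by norm_num)).continuousOn).div (by fun_prop)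
      fun t ht => by have := hspec t ht; positivity
  have hmul : a * cfc (fun t : ℝ => t ^ (4:ℝ)⁻¹ / (t + ε)) a =
      cfc (fun t : ℝ => t * (t ^ (4:ℝ)⁻¹ / (t + ε))) a := by
    rw [cfc_mul (fun t => t) _ a, cfc_id' ℝ a]
  rw [hmul, ← cfc_sub _ _ a]
  exact norm_cfc_le (by positivity) fun t ht => abs_rpow_sub_mul_rpow_div_le (hspec t ht) hε

section

variable {H K : Type*} [NormedAddCommGroup H] [InnerProductSpace ℂ H] [CompleteSpace H]
  [NormedAddCommGroup K] [InnerProductSpace ℂ K] [CompleteSpace K]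

lemma ContinuousLinearMap.norm_self_comp_adjoint (T : H →L[ℂ] K) : ‖T ∘L T†‖ = ‖T‖ * ‖T‖ := by
  simpa [LinearIsometryEquiv.norm_map] using norm_adjoint_comp_self (T†)

lemma nonneg_of_mem_spectrum_self_comp_adjoint (T : H →L[ℂ] K) {t : ℝ}
    (ht : t ∈ spectrum ℝ (T ∘L T†)) : 0 ≤ t :=
  spectrum_nonneg_of_nonneg ((nonneg_iff_isPositive _).2 (isPositive_self_comp_adjoint T)) ht

lemma norm_cfc_self_comp_adjoint_comp_le (T : H →L[ℂ] K) {h : ℝ → ℝ} {C : ℝ}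
    (hh : ContinuousOn h (spectrum ℝ (T ∘L T†))) (hC : 0 ≤ C)
    (hbound : ∀ t ∈ spectrum ℝ (T ∘L T†), |√t * h t| ≤ C) :
    ‖cfc h (T ∘L T†) ∘L T‖ ≤ C := by
  set A := T ∘L T†
  have hA : IsSelfAdjoint A := (isPositive_self_comp_adjoint T).isSelfAdjoint
  have hsq : ‖cfc h A ∘L T‖ ^ 2 = ‖cfc (fun t => h t * (t * h t)) A‖ := by
    have hself : (cfc h A)† = cfc h A := IsSelfAdjoint.adjoint_eq (cfc_predicate h A)
    rw [cfc_mul h (fun t => t * h t) A hh (continuousOn_id.mul hh),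
      cfc_mul (fun t => t) h A continuousOn_id hh, cfc_id' ℝ A, sq, ← norm_self_comp_adjoint,
      adjoint_comp, hself]
    rfl
  refine (pow_le_pow_iff_left₀ (norm_nonneg _) hC two_ne_zero).1
    (hsq ▸ norm_cfc_le (by positivity) fun t ht => ?_)
  have hsqrt : h t * (t * h t) = |√t * h t| ^ 2 := by
    rw [sq_abs, mul_pow, Real.sq_sqrt (nonneg_of_mem_spectrum_self_comp_adjoint T ht)]; ring
  rw [hsqrt, Real.norm_of_nonneg (sq_nonneg _)]
  exact pow_le_pow_left₀ (abs_nonneg _) (hbound t ht) 2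

lemma spectrum_self_comp_adjoint_subset_Icc (T : H →L[ℂ] K) :
    spectrum ℝ (T ∘L T†) ⊆ Set.Icc 0 ‖T ∘L T†‖ := fun t ht => by
  refine ⟨nonneg_of_mem_spectrum_self_comp_adjoint T ht, ?_⟩
  have := Metric.mem_closedBall.1 (spectrum.subset_closedBall_norm_mul (T ∘L T†) ht)
  rw [dist_zero_right, Real.norm_eq_abs] at this
  calc t ≤ |t| := le_abs_self t
    _ ≤ ‖T ∘L T†‖ * ‖(1 : K →L[ℂ] K)‖ := this
    _ ≤ ‖T ∘L T†‖ * 1 := by gcongr; exact norm_id_le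
    _ = ‖T ∘L T†‖ := mul_one _

noncomputable def regularizedFactor (T : H →L[ℂ] K) (ε : ℝ) : H →L[ℂ] K :=
  cfc (fun t : ℝ => ((t + ε) ^ (4:ℝ)⁻¹)⁻¹) (T ∘L T†) ∘L T

lemma norm_regularizedFactor_sub_le (T : H →L[ℂ] K) {a b : ℝ} (ha : 0 < a) (hb : 0 < b) :
    ‖regularizedFactor T a - regularizedFactor T b‖ ≤ a ^ (4:ℝ)⁻¹ + b ^ (4:ℝ)⁻¹ := by
  have hspec := spectrum_self_comp_adjoint_subset_Icc T
  have hcont {ε : ℝ} (hε : 0 < ε) :=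
    (continuousOn_inv_rpow_inv_four_add hε).mono (hspec.trans Set.Icc_subset_Ici_self)
  rw [regularizedFactor, regularizedFactor, ← sub_comp, ← cfc_sub _ _ _ (hcont ha) (hcont hb)]
  refine norm_cfc_self_comp_adjoint_comp_le T ((hcont ha).sub (hcont hb)) (by positivity)
    fun t ht => ?_
  have ht0 := (hspec ht).1
  calc |√t * (((t + a) ^ (4:ℝ)⁻¹)⁻¹ - ((t + b) ^ (4:ℝ)⁻¹)⁻¹)|
      = |(√t * ((t + a) ^ (4:ℝ)⁻¹)⁻¹ - t ^ (4:ℝ)⁻¹) -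
          (√t * ((t + b) ^ (4:ℝ)⁻¹)⁻¹ - t ^ (4:ℝ)⁻¹)| := by ring_nf
    _ ≤ _ := abs_sub _ _
    _ ≤ a ^ (4:ℝ)⁻¹ + b ^ (4:ℝ)⁻¹ := add_le_add
        (abs_sqrt_mul_inv_rpow_sub_rpow_le ht0 ha) (abs_sqrt_mul_inv_rpow_sub_rpow_le ht0 hb)

lemma norm_cfc_rpow_inv_four_comp_regularizedFactor_sub_le (T : H →L[ℂ] K) {ε : ℝ} (hε : 0 < ε) :
    ‖cfc (fun t : ℝ => t ^ (4:ℝ)⁻¹) (T ∘L T†) ∘L regularizedFactor T ε - T‖ ≤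
      ‖T ∘L T†‖ ^ (4:ℝ)⁻¹ * ε ^ (4:ℝ)⁻¹ := by
  have hspec := spectrum_self_comp_adjoint_subset_Icc T
  have hA : IsSelfAdjoint (T ∘L T†) := (isPositive_self_comp_adjoint T).isSelfAdjoint
  have hcont := (continuousOn_inv_rpow_inv_four_add hε).mono (hspec.trans Set.Icc_subset_Ici_self)
  have hrpow : ContinuousOn (fun t : ℝ => t ^ (4:ℝ)⁻¹) (spectrum ℝ (T ∘L T†)) :=
    (Real.continuous_rpow_const (by norm_num)).continuousOn
  have hprod : cfc (fun t : ℝ => t ^ (4:ℝ)⁻¹) (T ∘L T†) ∘L regularizedFactor T ε - T =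
      cfc (fun t : ℝ => t ^ (4:ℝ)⁻¹ * ((t + ε) ^ (4:ℝ)⁻¹)⁻¹ - 1) (T ∘L T†) ∘L T := by
    rw [regularizedFactor, ← comp_assoc, ← mul_def, ← cfc_mul _ _ _ hrpow hcont,
      cfc_sub (fun t : ℝ => t ^ (4:ℝ)⁻¹ * ((t + ε) ^ (4:ℝ)⁻¹)⁻¹) (fun _ => 1) _
        (hrpow.mul hcont) continuousOn_const, cfc_const_one ℝ (T ∘L T†), sub_comp, one_def,
      id_comp]
  rw [hprod]
  refine norm_cfc_self_comp_adjoint_comp_le T ((hrpow.mul hcont).sub continuousOn_const)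
    (by positivity) fun t ht => ?_
  obtain ⟨ht0, htA⟩ := hspec ht
  have hsqrt : √t * (t ^ (4:ℝ)⁻¹ * ((t + ε) ^ (4:ℝ)⁻¹)⁻¹ - 1) =
      t ^ (4:ℝ)⁻¹ * (√t * ((t + ε) ^ (4:ℝ)⁻¹)⁻¹ - t ^ (4:ℝ)⁻¹) := by
    rw [sqrt_eq_rpow_inv_four_sq ht0]; ring
  rw [hsqrt, abs_mul, abs_of_nonneg (by positivity)]
  gcongr
  exact abs_sqrt_mul_inv_rpow_sub_rpow_le ht0 hε

variable {T : H →L[ℂ] K}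

lemma IsCompactOperator.cfc_rpow_inv_four_self_comp_adjoint (hT : IsCompactOperator T) :
    IsCompactOperator (cfc (fun t : ℝ => t ^ (4:ℝ)⁻¹) (T ∘L T†) : K →L[ℂ] K) := by
  set ε : ℕ → ℝ := fun n => 1 / ((n : ℝ) + 1)
  have hε (n : ℕ) : 0 < ε n := by positivity
  set q : ℕ → ℝ → ℝ := fun n t => t ^ (4:ℝ)⁻¹ / (t + ε n)
  have hlim : Tendsto (fun n => (T ∘L T†) * cfc (q n) (T ∘L T†)) atTop
      (𝓝 (cfc (fun t : ℝ => t ^ (4:ℝ)⁻¹) (T ∘L T†))) := by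
    refine tendsto_iff_norm_sub_tendsto_zero.2 <|
      squeeze_zero (fun _ => norm_nonneg _) (fun n => ?_) tendsto_one_div_add_one_rpow_inv_four
    rw [norm_sub_rev]
    exact norm_cfc_rpow_inv_four_sub_mul_le
      ((nonneg_iff_isPositive _).2 (isPositive_self_comp_adjoint T)) (hε n)
  exact isClosed_setOfPred_isCompactOperator.mem_of_tendsto hlim
    (Eventually.of_forall fun n => hT.comp_clm (T† ∘L cfc (q n) (T ∘L T†)))

lemma IsCompactOperator.exists_eq_cfc_rpow_inv_four_comp (hT : IsCompactOperator T) :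
    ∃ S : H →L[ℂ] K, IsCompactOperator S ∧ T = cfc (fun t : ℝ => t ^ (4:ℝ)⁻¹) (T ∘L T†) ∘L S := by
  set k := cfc (fun t : ℝ => t ^ (4:ℝ)⁻¹) (T ∘L T†)
  set ε : ℕ → ℝ := fun n => 1 / ((n : ℝ) + 1)
  have hε (n : ℕ) : 0 < ε n := by positivity
  have hcauchy : CauchySeq fun n => regularizedFactor T (ε n) :=
    cauchySeq_of_dist_le_add tendsto_one_div_add_one_rpow_inv_four fun m n => by
      rw [dist_eq_norm]; exact norm_regularizedFactor_sub_le T (hε m) (hε n)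
  obtain ⟨S, hS⟩ := cauchySeq_tendsto_of_complete hcauchy
  refine ⟨S, isClosed_setOfPred_isCompactOperator.mem_of_tendsto hS
    (Eventually.of_forall fun n => hT.clm_comp _), tendsto_nhds_unique ?_
    (((compL ℂ H K K) k).continuous.tendsto S |>.comp hS)⟩
  refine tendsto_iff_norm_sub_tendsto_zero.2 <| squeeze_zero (fun _ => norm_nonneg _)
    (fun n => norm_cfc_rpow_inv_four_comp_regularizedFactor_sub_le T (hε n)) ?_
  simpa only [mul_zero] using tendsto_one_div_add_one_rpow_inv_four.const_mul (‖T ∘L T†‖ ^ (4:ℝ)⁻¹)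

end

/-- Let `H`, `K` be Hilbert spaces.  Every compact operator `T : H → K`
factors as `T = k ∘ S` with `k = (T T*)^{1/4} ∈ K(K)` positive and compact and `S ∈ K(H, K)`.
Consequently `K(H, K)` equals the closed linear span of `{k ∘ S : k ∈ K(K), S ∈ K(H, K)}`. -/
theorem stmt19 {H K : Type*} [NormedAddCommGroup H] [InnerProductSpace ℂ H] [CompleteSpace H]
    [NormedAddCommGroup K] [InnerProductSpace ℂ K] [CompleteSpace K] :
    (∀ T : H →L[ℂ] K, IsCompactOperator T →
      ∀ k : K →L[ℂ] K,
        k = cfc (fun t : ℝ => t ^ ((4 : ℝ)⁻¹)) (T ∘L ContinuousLinearMap.adjoint T) →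
        IsCompactOperator k ∧ k.IsPositive ∧
        ∃ S : H →L[ℂ] K, IsCompactOperator S ∧ T = k ∘L S) ∧
    {T : H →L[ℂ] K | IsCompactOperator T} =
      closure (Submodule.span ℂ {T : H →L[ℂ] K | ∃ (k : K →L[ℂ] K) (S : H →L[ℂ] K),
        IsCompactOperator k ∧ IsCompactOperator S ∧ T = k ∘L S} : Set (H →L[ℂ] K)) := by
  have factor : ∀ T : H →L[ℂ] K, IsCompactOperator T →
      ∀ k : K →L[ℂ] K, k = cfc (fun t : ℝ => t ^ ((4 : ℝ)⁻¹)) (T ∘L T†) →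
        IsCompactOperator k ∧ k.IsPositive ∧
        ∃ S : H →L[ℂ] K, IsCompactOperator S ∧ T = k ∘L S := by
    rintro T hT k rfl
    refine ⟨hT.cfc_rpow_inv_four_self_comp_adjoint, ?_, hT.exists_eq_cfc_rpow_inv_four_comp⟩
    exact (nonneg_iff_isPositive _).1 (cfc_nonneg fun t ht =>
      Real.rpow_nonneg (nonneg_of_mem_spectrum_self_comp_adjoint T ht) _)
  refine ⟨factor, subset_antisymm (fun T hT => ?_) ?_⟩
  · obtain ⟨hk, -, S, hS, hTS⟩ := factor T hT _ rfl
    exact subset_closure (Submodule.subset_span ⟨_, S, hk, hS, hTS⟩)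
  · refine closure_minimal ?_ isClosed_setOfPred_isCompactOperator
    refine (Submodule.span_le (p := compactOperator (RingHom.id ℂ) H K)).2 ?_
    rintro _ ⟨k, S, -, hS, rfl⟩
    exact hS.clm_comp k
end
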